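/- arXiv:2001.07232 — 6 statements merged into one kernel-verified Lean document; each statement's English description precedes it below -/
import Mathlib

section
/- Let α₁, α₂, α₃ be pairwise coprime positive integers and β₁, β₂ positive integers with α₁β₁ + α₂β₂ = α₁α₂ + α₃. Set d := gcd(α₁ + 2β₂, α₂ + 2β₁). Then gcd(d, α₁) = 1. -/
/-!
A common divisor `g` of `d` and `α₁` divides `2β₂`, so multiplying the relation by `2` shows
`g ∣ 2α₃`; as `α₁` and `α₃` are coprime, `g ∣ 2`. Then `g ∣ 2β₁` and `g ∣ α₂ + 2β₁` give
`g ∣ α₂`, and `gcd(α₁, α₂) = 1` forces `g = 1`.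
-/

theorem Nat.dvd_two_mul_of_mul_add_mul_eq {a₁ a₂ a₃ b₁ b₂ k : ℕ}
    (heq : a₁ * b₁ + a₂ * b₂ = a₁ * a₂ + a₃) (hk₁ : k ∣ a₁) (hk : k ∣ a₁ + 2 * b₂) :
    k ∣ 2 * a₃ := by
  have hkb : k ∣ 2 * b₂ := (Nat.dvd_add_right hk₁).mp hk
  have hsum : k ∣ 2 * (a₁ * a₂) + 2 * a₃ := by
    have hrel : 2 * (a₁ * a₂) + 2 * a₃ = 2 * (a₁ * b₁) + a₂ * (2 * b₂) := by
      linear_combination 2 * heq.symm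
    rw [hrel]
    exact dvd_add (dvd_mul_of_dvd_right (hk₁.mul_right b₁) 2) (dvd_mul_of_dvd_right hkb a₂)
  exact (Nat.dvd_add_right (dvd_mul_of_dvd_right (hk₁.mul_right a₂) 2)).mp hsum

theorem gcd_coprime_alpha_general (α₁ α₂ α₃ β₁ β₂ : ℕ)
    (h₁₂ : Nat.Coprime α₁ α₂) (h₁₃ : Nat.Coprime α₁ α₃)
    (heq : α₁ * β₁ + α₂ * β₂ = α₁ * α₂ + α₃) :
    Nat.Coprime (Nat.gcd (α₁ + 2 * β₂) (α₂ + 2 * β₁)) α₁ := by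
  set g := Nat.gcd (Nat.gcd (α₁ + 2 * β₂) (α₂ + 2 * β₁)) α₁
  have hgα₁ : g ∣ α₁ := Nat.gcd_dvd_right _ _
  have hg₁ : g ∣ α₁ + 2 * β₂ := (Nat.gcd_dvd_left _ _).trans (Nat.gcd_dvd_left _ _)
  have hg₂ : g ∣ α₂ + 2 * β₁ := (Nat.gcd_dvd_left _ _).trans (Nat.gcd_dvd_right _ _)
  have hg2 : g ∣ 2 := (h₁₃.coprime_dvd_left hgα₁).dvd_of_dvd_mul_right
    (Nat.dvd_two_mul_of_mul_add_mul_eq heq hgα₁ hg₁)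
  have hgα₂ : g ∣ α₂ := (Nat.dvd_add_left (hg2.mul_right β₁)).mp hg₂
  exact Nat.dvd_one.mp (h₁₂ ▸ Nat.dvd_gcd hgα₁ hgα₂)

/-- With α₁, α₂, α₃ pairwise coprime positive integers and β₁, β₂ positive with
α₁β₁ + α₂β₂ = α₁α₂ + α₃, the number d = gcd(α₁ + 2β₂, α₂ + 2β₁) satisfies gcd(d, α₁) = 1. -/
theorem gcd_coprime_alpha (α₁ α₂ α₃ β₁ β₂ : ℕ) (h₁ : 0 < α₁) (h₂ : 0 < α₂) (h₃ : 0 < α₃)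
    (hβ₁ : 0 < β₁) (hβ₂ : 0 < β₂)
    (h₁₂ : Nat.Coprime α₁ α₂) (h₁₃ : Nat.Coprime α₁ α₃) (h₂₃ : Nat.Coprime α₂ α₃)
    (heq : α₁ * β₁ + α₂ * β₂ = α₁ * α₂ + α₃) :
    Nat.Coprime (Nat.gcd (α₁ + 2 * β₂) (α₂ + 2 * β₁)) α₁ :=
  gcd_coprime_alpha_general α₁ α₂ α₃ β₁ β₂ h₁₂ h₁₃ heq
end

section
/- Let α₁, α₂, α₃ be pairwise coprime positive integers and β₁, β₂ positive integers with α₁β₁ + α₂β₂ = α₁α₂ + α₃. Set d := gcd(α₁ + 2β₂, α₂ + 2β₁). Then gcd(d, β₁) = 1 and gcd(d, β₂) = 1. -/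
/-!
A common divisor of `d` and `β₁` divides `α₂ + 2β₁`, hence `α₂`, and then by the defining relation
`α₁β₁ + α₂β₂ = α₁α₂ + α₃` also `α₃`; as `α₂` and `α₃` are coprime it is a unit. The case of `β₂`
is symmetric, with `α₁` in place of `α₂`.
-/

theorem IsCoprime.of_mul_add_eq_mul_add {R : Type*} [CommRing R] {a b c x y : R}
    (hac : IsCoprime a c) (heq : x * b + a * y = x * a + c) : IsCoprime a b := by
  have hc : c = x * b + a * (y - x) := by linear_combination -heq
  rw [hc, IsCoprime.add_mul_left_right_iff] at hac
  exact hac.of_mul_right_right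

theorem Nat.Coprime.of_mul_add_eq_mul_add {a b c x y : ℕ}
    (hac : Nat.Coprime a c) (heq : x * b + a * y = x * a + c) : Nat.Coprime a b := by
  rw [← Nat.isCoprime_iff_coprime] at hac ⊢
  exact hac.of_mul_add_eq_mul_add (x := (x : ℤ)) (y := y) (by exact_mod_cast heq)

theorem Nat.Coprime.coprime_of_dvd_add_mul {d a b k : ℕ} (hab : Nat.Coprime a b)
    (hd : d ∣ a + k * b) : Nat.Coprime d b :=
  Nat.Coprime.coprime_dvd_left hd ((Nat.coprime_add_mul_right_left a b k).mpr hab)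

theorem gcd_coprime_beta_general (α₁ α₂ α₃ β₁ β₂ : ℕ)
    (h₁₃ : Nat.Coprime α₁ α₃) (h₂₃ : Nat.Coprime α₂ α₃)
    (heq : α₁ * β₁ + α₂ * β₂ = α₁ * α₂ + α₃) :
    Nat.Coprime (Nat.gcd (α₁ + 2 * β₂) (α₂ + 2 * β₁)) β₁ ∧
      Nat.Coprime (Nat.gcd (α₁ + 2 * β₂) (α₂ + 2 * β₁)) β₂ := by
  have hα₂β₁ : Nat.Coprime α₂ β₁ := h₂₃.of_mul_add_eq_mul_add heq
  have hα₁β₂ : Nat.Coprime α₁ β₂ :=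
    h₁₃.of_mul_add_eq_mul_add (x := α₂) (y := β₁) (by linarith)
  exact ⟨hα₂β₁.coprime_of_dvd_add_mul (Nat.gcd_dvd_right _ _),
    hα₁β₂.coprime_of_dvd_add_mul (Nat.gcd_dvd_left _ _)⟩

/-- With α₁, α₂, α₃ pairwise coprime positive integers and β₁, β₂ positive with
α₁β₁ + α₂β₂ = α₁α₂ + α₃, the number d = gcd(α₁ + 2β₂, α₂ + 2β₁) satisfies
gcd(d, β₁) = 1 and gcd(d, β₂) = 1. -/
theorem gcd_coprime_beta (α₁ α₂ α₃ β₁ β₂ : ℕ) (h₁ : 0 < α₁) (h₂ : 0 < α₂) (h₃ : 0 < α₃)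
    (hβ₁ : 0 < β₁) (hβ₂ : 0 < β₂)
    (h₁₂ : Nat.Coprime α₁ α₂) (h₁₃ : Nat.Coprime α₁ α₃) (h₂₃ : Nat.Coprime α₂ α₃)
    (heq : α₁ * β₁ + α₂ * β₂ = α₁ * α₂ + α₃) :
    Nat.Coprime (Nat.gcd (α₁ + 2 * β₂) (α₂ + 2 * β₁)) β₁ ∧
      Nat.Coprime (Nat.gcd (α₁ + 2 * β₂) (α₂ + 2 * β₁)) β₂ :=
  gcd_coprime_beta_general α₁ α₂ α₃ β₁ β₂ h₁₃ h₂₃ heq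
end

section
/- Let α₁, α₂, α₃ be pairwise coprime positive integers and β₁, β₂ positive integers with α₁β₁ + α₂β₂ = α₁α₂ + α₃. Set d := gcd(α₁ + 2β₂, α₂ + 2β₁). Then gcd(d, α₁α₂ + α₃) = 1. -/
/-!
Write `N = α₁α₂ + α₃`. The relation gives `α₂(α₁ + 2β₂) + α₁(α₂ + 2β₁) = 2α₁α₂ + 2N`, so every
common divisor `g` of `d` and `N` divides `2α₁α₂`. Since `α₁` and `α₂` are not both even, `d` is
odd, hence `g ∣ α₁α₂`, hence `g ∣ N - α₁α₂ = α₃`; as `α₁α₂` and `α₃` are coprime, `g = 1`.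
-/

theorem coprime_two_gcd_add_two_mul {a b : ℕ} (hab : a.Coprime b) (c e : ℕ) :
    Nat.Coprime 2 (Nat.gcd (a + 2 * c) (b + 2 * e)) := by
  refine (Nat.Prime.coprime_iff_not_dvd Nat.prime_two).mpr fun h2 => ?_
  have ha : 2 ∣ a := (Nat.dvd_add_left (dvd_mul_right 2 c)).mp (h2.trans (Nat.gcd_dvd_left _ _))
  have hb : 2 ∣ b := (Nat.dvd_add_left (dvd_mul_right 2 e)).mp (h2.trans (Nat.gcd_dvd_right _ _))
  exact Nat.not_coprime_of_dvd_of_dvd one_lt_two ha hb hab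

theorem dvd_two_mul_mul_of_dvd {α₁ α₂ α₃ β₁ β₂ g : ℕ}
    (heq : α₁ * β₁ + α₂ * β₂ = α₁ * α₂ + α₃) (hA : g ∣ α₁ + 2 * β₂) (hB : g ∣ α₂ + 2 * β₁)
    (hN : g ∣ α₁ * α₂ + α₃) : g ∣ 2 * (α₁ * α₂) := by
  have key : α₂ * (α₁ + 2 * β₂) + α₁ * (α₂ + 2 * β₁) = 2 * (α₁ * α₂) + 2 * (α₁ * α₂ + α₃) := by
    rw [← heq]; ring
  have hsum : g ∣ 2 * (α₁ * α₂) + 2 * (α₁ * α₂ + α₃) :=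
    key ▸ dvd_add (hA.mul_left _) (hB.mul_left _)
  exact (Nat.dvd_add_left (hN.mul_left 2)).mp hsum

theorem gcd_coprime_degree_general (α₁ α₂ α₃ β₁ β₂ : ℕ)
    (h₁₂ : Nat.Coprime α₁ α₂) (h₁₃ : Nat.Coprime α₁ α₃) (h₂₃ : Nat.Coprime α₂ α₃)
    (heq : α₁ * β₁ + α₂ * β₂ = α₁ * α₂ + α₃) :
    Nat.Coprime (Nat.gcd (α₁ + 2 * β₂) (α₂ + 2 * β₁)) (α₁ * α₂ + α₃) := by
  set d := Nat.gcd (α₁ + 2 * β₂) (α₂ + 2 * β₁)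
  set g := Nat.gcd d (α₁ * α₂ + α₃)
  have hgd : g ∣ d := Nat.gcd_dvd_left _ _
  have hgN : g ∣ α₁ * α₂ + α₃ := Nat.gcd_dvd_right _ _
  have hg2 : g ∣ 2 * (α₁ * α₂) :=
    dvd_two_mul_mul_of_dvd heq (hgd.trans (Nat.gcd_dvd_left _ _))
      (hgd.trans (Nat.gcd_dvd_right _ _)) hgN
  have hg_odd : Nat.Coprime g 2 :=
    ((coprime_two_gcd_add_two_mul h₁₂ β₂ β₁).coprime_dvd_right hgd).symm
  have hg12 : g ∣ α₁ * α₂ := hg_odd.dvd_of_dvd_mul_left hg2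
  have hg3 : g ∣ α₃ := (Nat.dvd_add_right hg12).mp hgN
  exact Nat.dvd_one.mp ((Nat.Coprime.mul_left h₁₃ h₂₃).gcd_eq_one ▸ Nat.dvd_gcd hg12 hg3)

/-- With α₁, α₂, α₃ pairwise coprime positive integers and β₁, β₂ positive with
α₁β₁ + α₂β₂ = α₁α₂ + α₃, and d = gcd(α₁ + 2β₂, α₂ + 2β₁), one has gcd(d, α₁α₂ + α₃) = 1. -/
theorem gcd_coprime_degree (α₁ α₂ α₃ β₁ β₂ : ℕ) (h₁ : 0 < α₁) (h₂ : 0 < α₂) (h₃ : 0 < α₃)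
    (hβ₁ : 0 < β₁) (hβ₂ : 0 < β₂)
    (h₁₂ : Nat.Coprime α₁ α₂) (h₁₃ : Nat.Coprime α₁ α₃) (h₂₃ : Nat.Coprime α₂ α₃)
    (heq : α₁ * β₁ + α₂ * β₂ = α₁ * α₂ + α₃) :
    Nat.Coprime (Nat.gcd (α₁ + 2 * β₂) (α₂ + 2 * β₁)) (α₁ * α₂ + α₃) :=
  gcd_coprime_degree_general α₁ α₂ α₃ β₁ β₂ h₁₂ h₁₃ h₂₃ heq
end

section
/- Consider the group G with presentation ⟨ℓ, u | ℓ^N = 1, u³ = ℓ²⟩ where N = α₁α₂ + α₃ is even. Then the center of G contains ℓ², the quotient of G by the central cyclic subgroup generated by ℓ² (of order N/2) is isomorphic to the free product ℤ/2 * ℤ/3, and in particular G is a central extension of ℤ/2 * ℤ/3 by a cyclic group of order N/2. -/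
/-- Relations ℓ^N = 1, u³ = ℓ² on two generators (ℓ = generator 0, u = generator 1). -/
def cubicConicRels (N : ℕ) : Set (FreeGroup (Fin 2)) :=
  {FreeGroup.of 0 ^ N, FreeGroup.of 1 ^ 3 * (FreeGroup.of 0 ^ 2)⁻¹}

/-- The group G = ⟨ℓ, u | ℓ^N = 1, u³ = ℓ²⟩. -/
def cubicConicGroup (N : ℕ) := PresentedGroup (cubicConicRels N)

instance (N : ℕ) : Group (cubicConicGroup N) := by
  unfold cubicConicGroup; infer_instance

/-- The generator ℓ. -/
def ℓgen (N : ℕ) : cubicConicGroup N := PresentedGroup.of 0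

/-! `ℓ²` equals `u³`, so it commutes with both generators and is central; hence its normal closure
is the cyclic group it generates. Its order is `N / 2` because `ℓ` has order exactly `N`: the
assignment `ℓ ↦ 3, u ↦ 2` into `ℤ/3N` respects both relations and sends `ℓ` to an element of
order `N`. Killing `ℓ²` leaves `⟨ℓ, u | ℓ², u³⟩` (the relation `ℓ^N = 1` follows since `N` is
even), i.e. `ℤ/2 * ℤ/3`; the two mutually inverse homomorphisms are defined on generators. -/

section

variable {G : Type*} [Group G]

def zmodPowersHom (n : ℕ) (g : G) (hg : g ^ n = 1) : Multiplicative (ZMod n) →* G :=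
  AddMonoidHom.toMultiplicativeLeft
    (ZMod.lift n ⟨zmultiplesHom (Additive G) (Additive.ofMul g), by simp [← ofMul_pow, hg]⟩)

@[simp]
theorem zmodPowersHom_ofAdd_one (n : ℕ) (g : G) (hg : g ^ n = 1) :
    zmodPowersHom n g hg (Multiplicative.ofAdd 1) = g := by
  rw [zmodPowersHom, AddMonoidHom.toMultiplicativeLeft_apply_apply, toAdd_ofAdd, ← Int.cast_one,
    ZMod.lift_coe]
  simp

theorem MonoidHom.ext_mzmod {M : Type*} [Monoid M] {n : ℕ} {f g : Multiplicative (ZMod n) →* M}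
    (h : f (Multiplicative.ofAdd 1) = g (Multiplicative.ofAdd 1)) : f = g := by
  have hπ : Function.Surjective (AddMonoidHom.toMultiplicative (Int.castAddHom (ZMod n))) :=
    ZMod.intCast_surjective
  exact (MonoidHom.cancel_right hπ).1 (MonoidHom.ext_mint (by simpa using h))

theorem ZMod.ofAdd_one_pow_eq_one_of_dvd {n m : ℕ} (h : n ∣ m) :
    Multiplicative.ofAdd (1 : ZMod n) ^ m = 1 :=
  orderOf_dvd_iff_pow_eq_one.mp (by rwa [orderOf_ofAdd_eq_addOrderOf, ZMod.addOrderOf_one])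

namespace Subgroup

theorem normal_of_le_center {H : Subgroup G} (h : H ≤ center G) : H.Normal :=
  ⟨fun n hn g => by rwa [mem_center_iff.mp (h hn) g, mul_inv_cancel_right]⟩

theorem normalClosure_singleton_eq_zpowers {g : G} (hg : g ∈ center G) :
    normalClosure {g} = zpowers g :=
  have := normal_of_le_center (zpowers_le.mpr hg)
  le_antisymm (normalClosure_le_normal (by simp)) (zpowers_le.mpr (subset_normalClosure rfl))

end Subgroup

end

theorem PresentedGroup.mem_center_of_commute {α : Type*} {rels : Set (FreeGroup α)}
    {z : PresentedGroup rels} (h : ∀ a, Commute (PresentedGroup.of a) z) :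
    z ∈ Subgroup.center (PresentedGroup rels) := by
  rw [Subgroup.center_eq_iInf (PresentedGroup.closure_range_of rels)]
  simpa [Subgroup.mem_centralizer_singleton_iff, eq_comm] using fun a => (h a).eq

def ugen (N : ℕ) : cubicConicGroup N := PresentedGroup.of 1

namespace cubicConicGroup

variable {N : ℕ}

theorem ℓgen_pow_eq_one : ℓgen N ^ N = 1 :=
  (map_pow (PresentedGroup.mk _) _ N).symm.trans (PresentedGroup.one_of_mem (Set.mem_insert _ _))

theorem ugen_pow_three : ugen N ^ 3 = ℓgen N ^ 2 := by
  have h := PresentedGroup.mk_eq_mk_of_mul_inv_mem (rels := cubicConicRels N)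
    (x := FreeGroup.of 1 ^ 3) (y := FreeGroup.of 0 ^ 2) (Set.mem_insert_of_mem _ rfl)
  rwa [map_pow, map_pow] at h

section Lift

variable {H : Type*} [Group H]

def lift (a b : H) (ha : a ^ N = 1) (hb : b ^ 3 = a ^ 2) : cubicConicGroup N →* H :=
  PresentedGroup.toGroup (f := ![a, b]) <| by
    rintro r (rfl | rfl) <;> simp [ha, hb]

@[simp]
theorem lift_ℓgen (a b : H) (ha : a ^ N = 1) (hb : b ^ 3 = a ^ 2) :
    lift a b ha hb (ℓgen N) = a :=
  PresentedGroup.toGroup.of _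

@[simp]
theorem lift_ugen (a b : H) (ha : a ^ N = 1) (hb : b ^ 3 = a ^ 2) :
    lift a b ha hb (ugen N) = b :=
  PresentedGroup.toGroup.of _

theorem hom_ext {f g : cubicConicGroup N →* H} (hℓ : f (ℓgen N) = g (ℓgen N))
    (hu : f (ugen N) = g (ugen N)) : f = g :=
  PresentedGroup.ext fun i => by fin_cases i <;> assumption

end Lift

theorem ℓgen_sq_mem_center : ℓgen N ^ 2 ∈ Subgroup.center (cubicConicGroup N) :=
  PresentedGroup.mem_center_of_commute fun i => by
    fin_cases i
    · exact Commute.self_pow (ℓgen N) 2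
    · rw [← ugen_pow_three]; exact Commute.self_pow (ugen N) 3

theorem orderOf_ℓgen : orderOf (ℓgen N) = N := by
  have h3 : Multiplicative.ofAdd (3 : ZMod (3 * N)) ^ N = 1 := by
    have h0 : (N : ZMod (3 * N)) * 3 = 0 := by simpa [mul_comm] using ZMod.natCast_self (3 * N)
    rw [← ofAdd_nsmul, nsmul_eq_mul, h0, ofAdd_zero]
  have h2 : Multiplicative.ofAdd (2 : ZMod (3 * N)) ^ 3 = Multiplicative.ofAdd 3 ^ 2 := by
    rw [← ofAdd_nsmul, ← ofAdd_nsmul]; norm_num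
  have hδ : orderOf (lift _ _ h3 h2 (ℓgen N)) = N := by
    have h := ZMod.addOrderOf_coe' (3 * N) three_ne_zero
    rw [Nat.gcd_mul_right_left, Nat.mul_div_cancel_left _ three_pos, Nat.cast_ofNat] at h
    rw [lift_ℓgen, orderOf_ofAdd_eq_addOrderOf, h]
  exact Nat.dvd_antisymm (orderOf_dvd_of_pow_eq_one ℓgen_pow_eq_one)
    ((dvd_of_eq hδ.symm).trans (orderOf_map_dvd _ _))

theorem orderOf_ℓgen_sq (hN : Even N) : orderOf (ℓgen N ^ 2) = N / 2 := by
  rw [orderOf_pow_of_dvd two_ne_zero (by rw [orderOf_ℓgen]; exact hN.two_dvd), orderOf_ℓgen]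

variable (N)

def toCoprod (hN : Even N) :
    cubicConicGroup N →* Monoid.Coprod (Multiplicative (ZMod 2)) (Multiplicative (ZMod 3)) :=
  lift (Monoid.Coprod.inl (.ofAdd 1)) (Monoid.Coprod.inr (.ofAdd 1))
    (by rw [← map_pow, ZMod.ofAdd_one_pow_eq_one_of_dvd hN.two_dvd, map_one])
    (by rw [← map_pow, ZMod.ofAdd_one_pow_eq_one_of_dvd dvd_rfl, map_one, ← map_pow,
      ZMod.ofAdd_one_pow_eq_one_of_dvd dvd_rfl, map_one])

def ofCoprod :
    Monoid.Coprod (Multiplicative (ZMod 2)) (Multiplicative (ZMod 3)) →*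
      cubicConicGroup N ⧸ Subgroup.normalClosure {ℓgen N ^ 2} :=
  have hℓ : (ℓgen N : cubicConicGroup N ⧸ Subgroup.normalClosure {ℓgen N ^ 2}) ^ 2 = 1 := by
    rw [← QuotientGroup.mk_pow, QuotientGroup.eq_one_iff]
    exact Subgroup.subset_normalClosure rfl
  have hu : (ugen N : cubicConicGroup N ⧸ Subgroup.normalClosure {ℓgen N ^ 2}) ^ 3 = 1 := by
    rwa [← QuotientGroup.mk_pow, ugen_pow_three, QuotientGroup.mk_pow]
  Monoid.Coprod.lift (zmodPowersHom 2 _ hℓ) (zmodPowersHom 3 _ hu)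

def quotientEquivCoprod (hN : Even N) :
    cubicConicGroup N ⧸ Subgroup.normalClosure {ℓgen N ^ 2} ≃*
      Monoid.Coprod (Multiplicative (ZMod 2)) (Multiplicative (ZMod 3)) :=
  have hker : Subgroup.normalClosure {ℓgen N ^ 2} ≤ (toCoprod N hN).ker :=
    Subgroup.normalClosure_le_normal <| Set.singleton_subset_iff.mpr <| by
      rw [SetLike.mem_coe, MonoidHom.mem_ker, map_pow, toCoprod, lift_ℓgen, ← map_pow,
        ZMod.ofAdd_one_pow_eq_one_of_dvd dvd_rfl, map_one]
  MonoidHom.toMulEquiv (QuotientGroup.lift _ (toCoprod N hN) hker) (ofCoprod N)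
    (QuotientGroup.monoidHom_ext _
      (hom_ext (by simp [toCoprod, ofCoprod]) (by simp [toCoprod, ofCoprod])))
    (Monoid.Coprod.hom_ext (MonoidHom.ext_mzmod (by simp [toCoprod, ofCoprod]))
      (MonoidHom.ext_mzmod (by simp [toCoprod, ofCoprod])))

end cubicConicGroup

theorem cubicConicGroup_central_extension_general (N : ℕ) (hN : Even N) :
    (ℓgen N ^ 2 ∈ Subgroup.center (cubicConicGroup N)) ∧
    (Nat.card (Subgroup.normalClosure {ℓgen N ^ 2} : Subgroup (cubicConicGroup N)) = N / 2) ∧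
    IsCyclic (Subgroup.normalClosure {ℓgen N ^ 2} : Subgroup (cubicConicGroup N)) ∧
    Nonempty ((cubicConicGroup N ⧸ Subgroup.normalClosure {ℓgen N ^ 2}) ≃*
      Monoid.Coprod (Multiplicative (ZMod 2)) (Multiplicative (ZMod 3))) := by
  have hcenter := cubicConicGroup.ℓgen_sq_mem_center (N := N)
  have hK := Subgroup.normalClosure_singleton_eq_zpowers hcenter
  refine ⟨hcenter, ?_, ?_, ⟨cubicConicGroup.quotientEquivCoprod N hN⟩⟩
  · rw [hK, Nat.card_zpowers, cubicConicGroup.orderOf_ℓgen_sq hN]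
  · rw [hK]
    infer_instance

/-- In G = ⟨ℓ, u | ℓ^N = 1, u³ = ℓ²⟩ with N even, ℓ² is central, the (normal) subgroup it
generates is cyclic of order N/2, and the quotient of G by it is isomorphic to the free
product ℤ/2 * ℤ/3; in particular G is a central extension of ℤ/2 * ℤ/3 by a cyclic group
of order N/2. -/
theorem cubicConicGroup_central_extension (N : ℕ) (hN : Even N) (hpos : 0 < N) :
    (ℓgen N ^ 2 ∈ Subgroup.center (cubicConicGroup N)) ∧
    (Nat.card (Subgroup.normalClosure {ℓgen N ^ 2} : Subgroup (cubicConicGroup N)) = N / 2) ∧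
    IsCyclic (Subgroup.normalClosure {ℓgen N ^ 2} : Subgroup (cubicConicGroup N)) ∧
    Nonempty ((cubicConicGroup N ⧸ Subgroup.normalClosure {ℓgen N ^ 2}) ≃*
      Monoid.Coprod (Multiplicative (ZMod 2)) (Multiplicative (ZMod 3))) :=
  cubicConicGroup_central_extension_general N hN
end

section
/- Let S be a superisolated surface singularity in ℂ³ with tangent cone a reduced plane curve C_d of degree d having irreducible components of degrees δ₁, …, δ_s. Then the determinant of S (the absolute value of the determinant of the intersection matrix of a resolution) equals (d+1)^{s−1} · δ₁ ⋯ δ_s. In particular, if C_d is irreducible, det S = d. -/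
/-!
Writing `d = ∑ δᵢ` and `D = diag δ`, one has `-A = D ((d + 1) I - 𝟙 δᵀ)`. The second factor is a
scalar matrix minus a rank-one matrix, so its determinant is the characteristic polynomial of
`𝟙 δᵀ`, namely `X ^ s - d X ^ (s - 1)`, evaluated at `d + 1`; this gives `(d + 1) ^ (s - 1)`.
-/

open Matrix

namespace Matrix

variable {n R : Type*} [Fintype n] [DecidableEq n] [CommRing R]

theorem det_scalar_sub_vecMulVec (c : R) (u v : n → R) :
    (scalar n c - vecMulVec u v).det =
      c ^ Fintype.card n - (u ⬝ᵥ v) * c ^ (Fintype.card n - 1) := by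
  rw [← eval_charpoly, charpoly_vecMulVec]
  simp

end Matrix

section IntersectionMatrix

variable {n R : Type*} [Fintype n] [DecidableEq n] [CommRing R]

/-- The matrix `A` of the corollary. -/
def intersectionMatrix (δ : n → R) : Matrix n n R :=
  of fun i j => if i = j then -(δ i * ((∑ l, δ l) - δ i + 1)) else δ i * δ j

theorem neg_intersectionMatrix_eq (δ : n → R) :
    -intersectionMatrix δ = diagonal δ * (scalar n ((∑ l, δ l) + 1) - vecMulVec 1 δ) := by
  ext i j
  by_cases h : i = j
  · subst h
    simp only [intersectionMatrix, Matrix.neg_apply, of_apply, ↓reduceIte, neg_neg, scalar_apply,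
      one_vecMulVec, diagonal_mul, Matrix.sub_apply, diagonal_apply_eq, replicateRow_apply, mul_sub]
    ring
  · simp [intersectionMatrix, h]

theorem det_neg_intersectionMatrix (δ : n → R) :
    (-intersectionMatrix δ).det = ((∑ l, δ l) + 1) ^ (Fintype.card n - 1) * ∏ i, δ i := by
  rw [neg_intersectionMatrix_eq, det_mul, det_diagonal, det_scalar_sub_vecMulVec,
    one_dotProduct, mul_comm]
  congr 1
  cases hn : Fintype.card n with
  | zero =>
    have : IsEmpty n := Fintype.card_eq_zero_iff.mp hn
    simp
  | succ k =>
    rw [Nat.add_sub_cancel, pow_succ]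
    ring

end IntersectionMatrix

open Finset in
theorem det_superisolated_general (s : ℕ) (δ : Fin s → ℕ) :
    (-(Matrix.of fun i j : Fin s =>
        if i = j then -((δ i : ℤ) * ((∑ l, (δ l : ℤ)) - δ i + 1))
        else (δ i : ℤ) * δ j)).det =
      ((∑ l, (δ l : ℤ)) + 1) ^ (s - 1) * ∏ i, (δ i : ℤ) ∧
    (s = 1 →
      (-(Matrix.of fun i j : Fin s =>
          if i = j then -((δ i : ℤ) * ((∑ l, (δ l : ℤ)) - δ i + 1))
          else (δ i : ℤ) * δ j)).det = ∑ l, (δ l : ℤ)) := by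
  have hdet := det_neg_intersectionMatrix fun i => (δ i : ℤ)
  rw [Fintype.card_fin] at hdet
  refine ⟨hdet, ?_⟩
  rintro rfl
  exact hdet.trans (by simp)

open Finset in
/-- Corollary (cor:sis): for a superisolated singularity S whose tangent cone C_d has
irreducible components of degrees δ₁, …, δ_s (so d = δ₁ + ⋯ + δ_s), the intersection matrix
A of the resolution by one blow-up has diagonal entries −δᵢ(d − δᵢ + 1) and off-diagonal
entries δᵢδⱼ, and det S = det(−A) = (d+1)^{s−1} · δ₁ ⋯ δ_s.  In particular, if C_d is
irreducible (s = 1), then det S = d. -/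
theorem det_superisolated (s : ℕ) (hs : 0 < s) (δ : Fin s → ℕ) (hδ : ∀ i, 0 < δ i) :
    (-(Matrix.of fun i j : Fin s =>
        if i = j then -((δ i : ℤ) * ((∑ l, (δ l : ℤ)) - δ i + 1))
        else (δ i : ℤ) * δ j)).det =
      ((∑ l, (δ l : ℤ)) + 1) ^ (s - 1) * ∏ i, (δ i : ℤ) ∧
    (s = 1 →
      (-(Matrix.of fun i j : Fin s =>
          if i = j then -((δ i : ℤ) * ((∑ l, (δ l : ℤ)) - δ i + 1))
          else (δ i : ℤ) * δ j)).det = ∑ l, (δ l : ℤ)) :=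
  det_superisolated_general s δ
end

section
/- Let s ≥ 1, let δ₁, …, δ_s and k be positive rationals (or integers with entries in ℚ), set d = δ₁ + ⋯ + δ_s, and let A be the s×s matrix with A_{ii} = −δ_i(d − δ_i + k)/k and A_{ij} = δ_iδ_j/k for i ≠ j. Then det(−A) = δ₁ ⋯ δ_s · ((d+k)/k)^{s−1}. -/
/-!
Writing `d = ∑ δᵢ`, the matrix `-A` factors as `diag(δ) · (c • 1 - k⁻¹ 𝟙 δᵀ)` with
`c = (d + k) / k`. The second factor is a scalar matrix plus a rank-one matrix, so by the matrix
determinant lemma its determinant is `c ^ (s - 1) * (c - d / k) = c ^ (s - 1)`.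
-/

open Matrix

theorem Matrix.det_smul_one_add_replicateCol_mul_replicateRow {m R ι : Type*} [Fintype m]
    [DecidableEq m] [Nonempty m] [CommRing R] [Unique ι] {c : R} (hc : IsUnit c) (u v : m → R) :
    det (c • 1 + replicateCol ι u * replicateRow ι v) =
      c ^ (Fintype.card m - 1) * (c + v ⬝ᵥ u) := by
  obtain ⟨c, rfl⟩ := hc
  have hfactor : (c : R) • (1 : Matrix m m R) + replicateCol ι u * replicateRow ι v =
      (c : R) • (1 + replicateCol ι (c⁻¹ • u) * replicateRow ι v) := by
    rw [smul_add, replicateCol_smul, Matrix.smul_mul, Units.smul_def, smul_smul, Units.mul_inv,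
      one_smul]
  obtain ⟨n, hn⟩ := Nat.exists_eq_add_one_of_ne_zero (Fintype.card_ne_zero (α := m))
  rw [hfactor, det_smul, det_one_add_replicateCol_mul_replicateRow, hn, dotProduct_smul,
    Nat.add_sub_cancel, pow_succ, mul_assoc, mul_add, Units.smul_def, smul_eq_mul, ← mul_assoc,
    Units.mul_inv, mul_one, one_mul]

theorem neg_leYomdin_matrix_eq_diagonal_mul {K s : Type*} [Field K] [Fintype s] [DecidableEq s]
    (δ : s → K) {k : K} (hk : k ≠ 0) :
    -(Matrix.of fun i j : s =>
        if i = j then -(δ i * ((∑ l, δ l) - δ i + k)) / k else δ i * δ j / k) =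
      diagonal δ * ((((∑ l, δ l) + k) / k) • 1 +
        replicateCol Unit (fun _ ↦ -k⁻¹) * replicateRow Unit δ) := by
  ext i j
  rw [diagonal_mul]
  rcases eq_or_ne i j with rfl | hij
  · simp [mul_apply]
    field_simp
    ring
  · simp [mul_apply, hij]
    field_simp

open Finset in
/-- The linear-algebra core of Corollary (cor:ly): let δ₁, …, δ_s and k be positive
rationals, d = δ₁ + ⋯ + δ_s, and A the s×s matrix with A_{ii} = −δᵢ(d − δᵢ + k)/k and
A_{ij} = δᵢδⱼ/k for i ≠ j.  Then det(−A) = δ₁ ⋯ δ_s · ((d+k)/k)^{s−1}. -/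
theorem det_leYomdin_matrix (s : ℕ) (hs : 0 < s) (δ : Fin s → ℚ) (k : ℚ)
    (hδ : ∀ i, 0 < δ i) (hk : 0 < k) :
    (-(Matrix.of fun i j : Fin s =>
        if i = j then -(δ i * ((∑ l, δ l) - δ i + k)) / k
        else δ i * δ j / k)).det =
      (∏ i, δ i) * (((∑ l, δ l) + k) / k) ^ (s - 1) := by
  have : Nonempty (Fin s) := ⟨⟨0, hs⟩⟩
  have hdk : 0 < (∑ l, δ l) + k := add_pos (sum_pos (fun i _ ↦ hδ i) univ_nonempty) hk
  have hc_sub : ((∑ l, δ l) + k) / k + δ ⬝ᵥ (fun _ ↦ -k⁻¹) = 1 := by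
    rw [dotProduct, ← sum_mul]
    field_simp
    ring
  rw [neg_leYomdin_matrix_eq_diagonal_mul δ hk.ne', det_mul, det_diagonal,
    det_smul_one_add_replicateCol_mul_replicateRow (div_pos hdk hk).ne'.isUnit, hc_sub,
    Fintype.card_fin, mul_one]
end
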